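/- arXiv:1910.04450 — 5 statements merged into one kernel-verified Lean document; each statement's English description precedes it below -/
import Mathlib

section
/- Let γ ∈ [0,1) and let (V_t)_{t∈ℕ} and (r_t)_{t∈ℕ} be sequences of real numbers such that the series ∑_{t=0}^∞ γ^t · r_t converges absolutely and γ^t · V_t → 0 as t → ∞. Define A_t := r_t + γ·V_{t+1} − V_t. Then the series ∑_{t=0}^∞ γ^t · A_t converges and ∑_{t=0}^∞ γ^t · A_t = (∑_{t=0}^∞ γ^t · r_t) − V_0. -/
open Filter Topology

/-- Infinite-horizon advantage decomposition (deterministic core of Lemma 4):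
if `∑ γ^t * r t` converges absolutely and `γ^t * V t → 0`, then the series
`∑ γ^t * A t` (with `A t = r t + γ * V (t+1) - V t`) converges, in the sense
that its partial sums tend to `(∑' t, γ^t * r t) - V 0`. -/
theorem discounted_advantage_series_telescope
    (γ : ℝ) (hγ0 : 0 ≤ γ) (hγ1 : γ < 1) (V r A : ℕ → ℝ)
    (hr : Summable fun t => γ ^ t * |r t|)
    (hV : Tendsto (fun t => γ ^ t * V t) atTop (𝓝 0))
    (hA : ∀ t, A t = r t + γ * V (t + 1) - V t) :
    Tendsto (fun N => ∑ t ∈ Finset.range N, γ ^ t * A t) atTop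
      (𝓝 ((∑' t, γ ^ t * r t) - V 0)) := by
  have hsum : Summable fun t => γ ^ t * r t := by
    refine Summable.of_abs ?_
    have : (fun t => |γ ^ t * r t|) = fun t => γ ^ t * |r t| := by
      funext t
      rw [abs_mul, abs_of_nonneg (pow_nonneg hγ0 t)]
    rw [this]; exact hr
  have key : ∀ N, ∑ t ∈ Finset.range N, γ ^ t * A t
      = (∑ t ∈ Finset.range N, γ ^ t * r t) + (γ ^ N * V N - γ ^ 0 * V 0) := by
    intro N
    rw [← Finset.sum_range_sub (fun t => γ ^ t * V t), ← Finset.sum_add_distrib]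
    refine Finset.sum_congr rfl fun t _ => ?_
    rw [hA t]
    ring
  simp only [key, pow_zero, one_mul]
  have h1 : Tendsto (fun N => ∑ t ∈ Finset.range N, γ ^ t * r t) atTop
      (𝓝 (∑' t, γ ^ t * r t)) := hsum.hasSum.tendsto_sum_nat
  have := h1.add (hV.sub (tendsto_const_nhds (x := V 0)))
  simpa [sub_eq_add_neg] using this
end

section
/- Let γ ∈ (0,1), let k ≥ 1 be a natural number, and let (a_n)_{n∈ℕ} be a sequence of real numbers with ∑_{n=0}^∞ (γ^k)^n · |a_n| < ∞. Define the low-level auxiliary reward sequence r_t := a_{⌊t/k⌋} / k for t ∈ ℕ (each block value split evenly among its k steps). Then the low-level discounted return satisfies ∑_{t=0}^∞ γ^t · r_t = (1/k) · ((1 − γ^k)/(1 − γ)) · ∑_{n=0}^∞ (γ^k)^n · a_n. -/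
/-!
Group the low-level return into blocks of `k` consecutive steps: block `n` contributes
`γ^(nk) (1 + γ + ⋯ + γ^(k-1)) a_n / k`, and the geometric sum equals `(1 - γ^k)/(1 - γ)`.
The regrouping is justified by absolute summability, which follows from
`γ^t ≤ (γ^k)^⌊t/k⌋`.
-/

open Finset

theorem HasSum.sum_range_blocks {α : Type*} [AddCommMonoid α] [TopologicalSpace α]
    [ContinuousAdd α] [T3Space α] {f : ℕ → α} {s : α} {k : ℕ} [NeZero k] (h : HasSum f s) :
    HasSum (fun n => ∑ i ∈ range k, f (n * k + i)) s := by
  have hprod : HasSum (fun p : ℕ × Fin k => f (p.1 * k + p.2)) s :=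
    (Nat.divModEquiv k).symm.hasSum_iff.mpr h
  refine hprod.prod_fiberwise fun n => ?_
  rw [← Fin.sum_univ_eq_sum_range]
  exact hasSum_fintype _

theorem Summable.comp_nat_div {g : ℕ → ℝ} (hg : Summable g) (k : ℕ) [NeZero k] :
    Summable fun t => g (t / k) := by
  have hprod : Summable fun p : ℕ × Fin k => |g p.1| := by
    simpa using hg.abs.mul_of_nonneg (Summable.of_finite :
      Summable fun _ : Fin k => (1 : ℝ)) (fun _ => abs_nonneg _) fun _ => zero_le_one
  exact Summable.of_abs ((Nat.divModEquiv k).summable_iff.mpr hprod)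

theorem sum_range_pow_mul_add {K : Type*} [Field K] {x : K} (hx : x ≠ 1) (n k : ℕ) :
    ∑ i ∈ range k, x ^ (n * k + i) = (x ^ k) ^ n * ((1 - x ^ k) / (1 - x)) := by
  simp only [pow_add, ← mul_sum, ← pow_mul', ← Nat.Ico_zero_eq_range, geom_sum_Ico' hx k.zero_le,
    pow_zero]

/-- HAAR low-level discounted return (Lemma 3): with the auxiliary reward
`r t = a (t / k) / k` (each block value split evenly among its `k` steps),
the low-level discounted return equals
`(1/k) * ((1 - γ^k)/(1 - γ))` times the `k`-step-discounted sum of `a`. -/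
theorem low_level_discounted_return_of_split_reward
    (γ : ℝ) (hγ0 : 0 < γ) (hγ1 : γ < 1) (k : ℕ) (hk : 1 ≤ k) (a : ℕ → ℝ)
    (ha : Summable fun n => (γ ^ k) ^ n * |a n|) (r : ℕ → ℝ)
    (hr : ∀ t : ℕ, r t = a (t / k) / k) :
    ∑' t : ℕ, γ ^ t * r t =
      (1 / (k : ℝ)) * ((1 - γ ^ k) / (1 - γ)) * ∑' n : ℕ, (γ ^ k) ^ n * a n := by
  have : NeZero k := ⟨by omega⟩
  have hr_block : ∀ n i, i < k → r (n * k + i) = a n / k := fun n i hi => by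
    rw [hr, Nat.add_comm, Nat.add_mul_div_right _ _ (by omega), Nat.div_eq_of_lt hi, zero_add]
  have hblock : ∀ n, ∑ i ∈ range k, γ ^ (n * k + i) * r (n * k + i) =
      (1 / (k : ℝ)) * ((1 - γ ^ k) / (1 - γ)) * ((γ ^ k) ^ n * a n) := fun n => by
    rw [sum_congr rfl fun i hi => by rw [hr_block n i (mem_range.mp hi)], ← sum_mul,
      sum_range_pow_mul_add hγ1.ne]
    ring
  have hsummable : Summable fun t => γ ^ t * r t := by
    refine .of_norm_bounded ((ha.div_const k).comp_nat_div k) fun t => ?_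
    have hpow : γ ^ t ≤ (γ ^ k) ^ (t / k) := by
      rw [← pow_mul']
      exact pow_le_pow_of_le_one hγ0.le hγ1.le (Nat.div_mul_le_self t k)
    rw [hr, norm_mul, norm_div, Real.norm_of_nonneg (by positivity), Real.norm_natCast,
      Real.norm_eq_abs, mul_div_assoc]
    gcongr
  rw [← tsum_mul_left, ← (hsummable.hasSum.sum_range_blocks (k := k)).tsum_eq]
  exact tsum_congr hblock
end

section
/- Let k ≥ 1 be a natural number, let γ_h ∈ (0,1), and set γ_l := γ_h^{1/k} (the positive real k-th root). Let (a_n)_{n∈ℕ} be a sequence of real numbers with ∑_{n=0}^∞ γ_h^n · |a_n| < ∞, and define r_t := a_{⌊t/k⌋}/k. Then ∑_{t=0}^∞ γ_l^t · r_t = (1/k) · ((1 − γ_l^k)/(1 − γ_l)) · ∑_{n=0}^∞ γ_h^n · a_n, and the constant (1/k)·((1 − γ_l^k)/(1 − γ_l)) is strictly positive. -/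
/-- Lemma 3 with exact discount matching `γ_l = γ_h^(1/k)`: the low-level
objective built from the evenly split auxiliary rewards `r t = a (t/k) / k`
equals a strictly positive constant times the high-level discounted sum. -/
theorem low_level_return_matched_discount
    (k : ℕ) (hk : 1 ≤ k) (γh : ℝ) (hγh0 : 0 < γh) (hγh1 : γh < 1)
    (γl : ℝ) (hγl : γl = γh ^ ((1 : ℝ) / (k : ℝ)))
    (a : ℕ → ℝ) (ha : Summable fun n => γh ^ n * |a n|)
    (r : ℕ → ℝ) (hr : ∀ t : ℕ, r t = a (t / k) / k) :
    (∑' t : ℕ, γl ^ t * r t =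
        (1 / (k : ℝ)) * ((1 - γl ^ k) / (1 - γl)) * ∑' n : ℕ, γh ^ n * a n) ∧
      0 < (1 / (k : ℝ)) * ((1 - γl ^ k) / (1 - γl)) := by
  have hk0 : (k : ℝ) ≠ 0 := by positivity
  have hkpos : (0 : ℝ) < k := by exact_mod_cast hk
  have hγl0 : 0 < γl := by rw [hγl]; exact Real.rpow_pos_of_pos hγh0 _
  have hγl1 : γl < 1 := by
    rw [hγl]
    exact Real.rpow_lt_one hγh0.le hγh1 (by positivity)
  have hγlk : γl ^ k = γh := by
    rw [hγl, ← Real.rpow_natCast (γh ^ ((1:ℝ)/(k:ℝ))) k, ← Real.rpow_mul hγh0.le]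
    rw [one_div, inv_mul_cancel₀ hk0, Real.rpow_one]
  haveI : NeZero k := ⟨Nat.one_le_iff_ne_zero.mp hk⟩
  -- summability of high-level sum with norms
  have hA : Summable fun n : ℕ => ‖γh ^ n * a n‖ := by
    simpa [norm_mul, Real.norm_eq_abs, abs_of_pos hγh0] using ha
  have hB : Summable fun j : Fin k => ‖γl ^ (j : ℕ) / (k : ℝ)‖ :=
    Summable.of_finite
  have key :
      ((∑' n : ℕ, γh ^ n * a n) * ∑' j : Fin k, γl ^ (j : ℕ) / (k : ℝ)) =
        ∑' p : ℕ × Fin k, (γh ^ p.1 * a p.1) * (γl ^ (p.2 : ℕ) / (k : ℝ)) :=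
    tsum_mul_tsum_of_summable_norm hA hB
  have hcomp :
      (fun t : ℕ => γl ^ t * r t) =
        (fun p : ℕ × Fin k => (γh ^ p.1 * a p.1) * (γl ^ (p.2 : ℕ) / (k : ℝ)))
          ∘ (Nat.divModEquiv k) := by
    funext t
    simp only [Function.comp, Nat.divModEquiv_apply, hr t, Fin.val_natCast, Fin.val_ofNat]
    have ht : γl ^ t = γh ^ (t / k) * γl ^ (t % k) := by
      rw [← hγlk, ← pow_mul, ← pow_add]
      rw [Nat.div_add_mod]
    rw [ht]
    ring
  have hsum_t :
      ∑' t : ℕ, γl ^ t * r t =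
        ∑' p : ℕ × Fin k, (γh ^ p.1 * a p.1) * (γl ^ (p.2 : ℕ) / (k : ℝ)) := by
    rw [hcomp]
    exact (Nat.divModEquiv k).tsum_eq
      (fun p : ℕ × Fin k => (γh ^ p.1 * a p.1) * (γl ^ (p.2 : ℕ) / (k : ℝ)))
  have hgeom : ∑' j : Fin k, γl ^ (j : ℕ) / (k : ℝ) =
      (1 / (k : ℝ)) * ((1 - γl ^ k) / (1 - γl)) := by
    rw [tsum_fintype]
    rw [← Finset.sum_div]
    rw [Fin.sum_univ_eq_sum_range (fun i => γl ^ i)]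
    rw [geom_sum_eq (ne_of_lt hγl1)]
    rw [div_div]
    rw [show (γl ^ k - 1) / ((γl - 1) * k) = (1 - γl ^ k) / ((1 - γl) * k) by
      rw [← neg_div_neg_eq]; ring_nf]
    field_simp
  constructor
  · rw [hsum_t, ← key, hgeom]; ring
  · have h1 : (0:ℝ) < 1 - γl ^ k := by rw [hγlk]; linarith
    have h2 : (0:ℝ) < 1 - γl := by linarith
    positivity
end

section
/- Let k ≥ 1 be a natural number, let γ_h ∈ (0,1), and set γ_l := γ_h^{1/k}. Let (r^h_n)_{n∈ℕ} and (V_n)_{n∈ℕ} be sequences of real numbers with ∑_{n=0}^∞ γ_h^n · |r^h_n| < ∞ and γ_h^n · V_n → 0 as n → ∞. Define the high-level advantages a_n := r^h_n + γ_h·V_{n+1} − V_n and the low-level auxiliary rewards r^l_t := a_{⌊t/k⌋}/k for t ∈ ℕ. Then the series ∑_{t=0}^∞ γ_l^t · r^l_t converges and ∑_{t=0}^∞ γ_l^t · r^l_t = (1/k) · ((1 − γ_l^k)/(1 − γ_l)) · ((∑_{n=0}^∞ γ_h^n · r^h_n) − V_0). -/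
open Filter Topology

/-- Lemmas 3 and 4 combined under exact discount matching `γ_l = γ_h^(1/k)`:
the low-level auxiliary objective (whose rewards evenly split the high-level
advantages `a n = r^h n + γ_h V (n+1) - V n`) converges, its partial sums
tending to `(1/k) * ((1 - γ_l^k)/(1 - γ_l)) * ((∑' n, γ_h^n * r^h n) - V 0)`. -/
theorem low_level_auxiliary_objective_eq
    (k : ℕ) (hk : 1 ≤ k) (γh : ℝ) (hγh0 : 0 < γh) (hγh1 : γh < 1)
    (γl : ℝ) (hγl : γl = γh ^ ((1 : ℝ) / (k : ℝ)))
    (rh V : ℕ → ℝ)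
    (hrh : Summable fun n => γh ^ n * |rh n|)
    (hV : Tendsto (fun n => γh ^ n * V n) atTop (𝓝 0))
    (a : ℕ → ℝ) (ha : ∀ n, a n = rh n + γh * V (n + 1) - V n)
    (rl : ℕ → ℝ) (hrl : ∀ t : ℕ, rl t = a (t / k) / k) :
    Tendsto (fun N => ∑ t ∈ Finset.range N, γl ^ t * rl t) atTop
      (𝓝 ((1 / (k : ℝ)) * ((1 - γl ^ k) / (1 - γl)) *
        ((∑' n : ℕ, γh ^ n * rh n) - V 0))) := by
  have hkpos : 0 < k := hk
  have hkR : ((k : ℝ)) ≠ 0 := Nat.cast_ne_zero.2 (by omega)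
  have hγl0 : 0 < γl := by rw [hγl]; exact Real.rpow_pos_of_pos hγh0 _
  have hγlk : γl ^ k = γh := by
    rw [hγl, ← Real.rpow_natCast (γh ^ ((1 : ℝ) / (k : ℝ))) k,
      ← Real.rpow_mul hγh0.le, one_div, inv_mul_cancel₀ hkR, Real.rpow_one]
  have hγl1 : γl < 1 := by
    by_contra h
    push_neg at h
    have : (1 : ℝ) ≤ γl ^ k := one_le_pow₀ h
    rw [hγlk] at this; linarith
  -- telescoping
  have tele : ∀ N, ∑ n ∈ Finset.range N, γh ^ n * a n
      = (∑ n ∈ Finset.range N, γh ^ n * rh n) + γh ^ N * V N - V 0 := by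
    intro N
    induction N with
    | zero => simp
    | succ N ih =>
      rw [Finset.sum_range_succ, ih, Finset.sum_range_succ, ha]
      ring
  -- block sum
  have block : ∀ N, ∑ t ∈ Finset.range (k * N), γl ^ t * rl t
      = (∑ j ∈ Finset.range k, γl ^ j) / k * ∑ n ∈ Finset.range N, γh ^ n * a n := by
    intro N
    induction N with
    | zero => simp
    | succ N ih =>
      have hmul : k * (N + 1) = k * N + k := by ring
      rw [hmul, Finset.sum_range_add, ih, Finset.sum_range_succ]
      have h2 : ∀ j ∈ Finset.range k, γl ^ (k * N + j) * rl (k * N + j)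
          = γl ^ j * (γh ^ N * (a N / k)) := by
        intro j hj
        have hj' : j < k := Finset.mem_range.mp hj
        have hdiv : (k * N + j) / k = N := by
          rw [Nat.mul_add_div hkpos, Nat.div_eq_of_lt hj', add_zero]
        rw [hrl, hdiv, pow_add, pow_mul, hγlk]
        ring
      rw [Finset.sum_congr rfl h2, ← Finset.sum_mul]
      field_simp
  -- summability of the signed series
  have hsum : Summable fun n => γh ^ n * rh n := by
    refine Summable.of_abs (hrh.congr fun n => ?_)
    rw [abs_mul, abs_of_nonneg (pow_nonneg hγh0.le n)]
  -- limit of high-level partial sums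
  have hT : Tendsto (fun N => ∑ n ∈ Finset.range N, γh ^ n * a n) atTop
      (𝓝 ((∑' n : ℕ, γh ^ n * rh n) - V 0)) := by
    have h1 := hsum.hasSum.tendsto_sum_nat
    have h2 := (h1.add hV).sub (tendsto_const_nhds (x := V 0))
    rw [add_zero] at h2
    exact h2.congr fun N => (tele N).symm
  set S := (∑' n : ℕ, γh ^ n * rh n) with hS
  set C := (∑ j ∈ Finset.range k, γl ^ j) / k with hCdef
  have hblock : Tendsto (fun N => ∑ t ∈ Finset.range (k * N), γl ^ t * rl t) atTop
      (𝓝 (C * (S - V 0))) :=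
    (hT.const_mul C).congr fun N => (block N).symm
  -- geometric sum identity
  have hC : C = (1 / (k : ℝ)) * ((1 - γl ^ k) / (1 - γl)) := by
    rw [hCdef, geom_sum_eq hγl1.ne k]
    have h1 : γl - 1 ≠ 0 := sub_ne_zero.2 hγl1.ne
    have h2 : (1 : ℝ) - γl ≠ 0 := sub_ne_zero.2 hγl1.ne'
    field_simp
    ring
  -- γh^n * a n → 0
  have ha0 : Tendsto (fun n => γh ^ n * a n) atTop (𝓝 0) := by
    have h1 : Tendsto (fun n => γh ^ n * rh n) atTop (𝓝 0) := hsum.tendsto_atTop_zero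
    have h2 : Tendsto (fun n => γh ^ (n + 1) * V (n + 1)) atTop (𝓝 0) :=
      hV.comp (tendsto_add_atTop_nat 1)
    have h3 := (h1.add h2).sub hV
    rw [add_zero, sub_zero] at h3
    refine h3.congr fun n => ?_
    rw [ha]; ring
  have habs : Tendsto (fun n => |γh ^ n * a n|) atTop (𝓝 0) := by
    simpa using ha0.abs
  -- M / k → ∞
  have hdivtend : Tendsto (fun M : ℕ => M / k) atTop atTop := by
    refine tendsto_atTop_atTop.2 fun b => ⟨k * b, fun M hM => ?_⟩
    refine (Nat.le_div_iff_mul_le hkpos).2 ?_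
    rw [mul_comm]; omega
  -- split at a multiple of k
  have hMsplit : ∀ M, ∑ t ∈ Finset.range M, γl ^ t * rl t
      = (∑ t ∈ Finset.range (k * (M / k)), γl ^ t * rl t)
        + ∑ j ∈ Finset.range (M % k), γl ^ (k * (M / k) + j) * rl (k * (M / k) + j) := by
    intro M
    conv_lhs => rw [show M = k * (M / k) + M % k from (Nat.div_add_mod M k).symm]
    rw [Finset.sum_range_add]
  -- tail vanishes
  have htail : Tendsto (fun M => ∑ j ∈ Finset.range (M % k),
      γl ^ (k * (M / k) + j) * rl (k * (M / k) + j)) atTop (𝓝 0) := by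
    refine squeeze_zero_norm (fun M => ?_) (habs.comp hdivtend)
    set N := M / k with hN
    calc ‖∑ j ∈ Finset.range (M % k), γl ^ (k * N + j) * rl (k * N + j)‖
        ≤ ∑ j ∈ Finset.range (M % k), ‖γl ^ (k * N + j) * rl (k * N + j)‖ :=
          norm_sum_le _ _
      _ ≤ ∑ _j ∈ Finset.range (M % k), |γh ^ N * a N| / k := by
          refine Finset.sum_le_sum fun j hj => ?_
          have hj' : j < k := lt_of_lt_of_le (Finset.mem_range.mp hj) (Nat.mod_lt M hkpos).le
          have hdiv : (k * N + j) / k = N := by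
            rw [Nat.mul_add_div hkpos, Nat.div_eq_of_lt hj', add_zero]
          rw [hrl, hdiv, Real.norm_eq_abs, abs_mul, abs_div,
            abs_of_nonneg (pow_nonneg hγl0.le _), Nat.abs_cast, abs_mul,
            abs_of_nonneg (pow_nonneg hγh0.le _)]
          have hpow : γl ^ (k * N + j) ≤ γh ^ N := by
            rw [← hγlk, ← pow_mul]
            exact pow_le_pow_of_le_one hγl0.le hγl1.le (Nat.le_add_right _ _)
          rw [mul_div_assoc]
          exact mul_le_mul_of_nonneg_right hpow (by positivity)
      _ = ((M % k : ℕ) : ℝ) * (|γh ^ N * a N| / k) := by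
          rw [Finset.sum_const, Finset.card_range, nsmul_eq_mul]
      _ ≤ (k : ℝ) * (|γh ^ N * a N| / k) := by
          have : ((M % k : ℕ) : ℝ) ≤ (k : ℝ) := by exact_mod_cast (Nat.mod_lt M hkpos).le
          exact mul_le_mul_of_nonneg_right this (by positivity)
      _ = |γh ^ N * a N| := by field_simp
  -- combine
  have hmain := (hblock.comp hdivtend).add htail
  rw [add_zero] at hmain
  have hfinal : Tendsto (fun M => ∑ t ∈ Finset.range M, γl ^ t * rl t) atTop
      (𝓝 (C * (S - V 0))) := hmain.congr fun M => (hMsplit M).symm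
  rw [hC] at hfinal
  exact hfinal
end

section
/- Let k ≥ 1 be a natural number, let γ_h ∈ (0,1), and set γ_l := γ_h^{1/k}. Let (r^h_n, V_n)_{n∈ℕ} and (r̃^h_n, Ṽ_n)_{n∈ℕ} be two pairs of real sequences, each satisfying ∑_{n=0}^∞ γ_h^n·|r^h_n| < ∞, ∑_{n=0}^∞ γ_h^n·|r̃^h_n| < ∞, γ_h^n·V_n → 0, γ_h^n·Ṽ_n → 0, and sharing the same initial value V_0 = Ṽ_0. Define a_n := r^h_n + γ_h·V_{n+1} − V_n, ã_n := r̃^h_n + γ_h·Ṽ_{n+1} − Ṽ_n, and the low-level auxiliary rewards r^l_t := a_{⌊t/k⌋}/k, r̃^l_t := ã_{⌊t/k⌋}/k. Then ∑_{t=0}^∞ γ_l^t · r̃^l_t ≥ ∑_{t=0}^∞ γ_l^t · r^l_t if and only if ∑_{n=0}^∞ γ_h^n · r̃^h_n ≥ ∑_{n=0}^∞ γ_h^n · r^h_n. -/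
open Filter Topology

lemma haar_aux (k : ℕ) (hk : 1 ≤ k) (γh γl : ℝ) (hγh0 : 0 < γh)
    (hγl0 : 0 < γl) (hγlk : γl ^ k = γh)
    (rh V : ℕ → ℝ)
    (hrh : Summable fun n => γh ^ n * |rh n|)
    (hV : Tendsto (fun n => γh ^ n * V n) atTop (𝓝 0))
    (a : ℕ → ℝ) (ha : ∀ n, a n = rh n + γh * V (n + 1) - V n)
    (rl : ℕ → ℝ) (hrl : ∀ t : ℕ, rl t = a (t / k) / k)
    (L : ℝ)
    (hL : Tendsto (fun N => ∑ t ∈ Finset.range N, γl ^ t * rl t) atTop (𝓝 L)) :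
    L = ((∑ j ∈ Finset.range k, γl ^ j) / k) * ((∑' n : ℕ, γh ^ n * rh n) - V 0) := by
  have hk0 : 0 < k := hk
  set c : ℝ := (∑ j ∈ Finset.range k, γl ^ j) / k with hc
  -- summability of signed series
  have hsum : Summable fun n => γh ^ n * rh n := by
    apply Summable.of_abs
    refine hrh.congr fun n => ?_
    rw [abs_mul, abs_of_pos (pow_pos hγh0 n)]
  -- telescoping identity
  have htel : ∀ M : ℕ, ∑ n ∈ Finset.range M, γh ^ n * a n
      = (∑ n ∈ Finset.range M, γh ^ n * rh n) + (γh ^ M * V M - V 0) := by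
    intro M
    have : ∀ n, γh ^ n * a n
        = γh ^ n * rh n + (γh ^ (n + 1) * V (n + 1) - γh ^ n * V n) := by
      intro n; rw [ha n]; ring
    calc ∑ n ∈ Finset.range M, γh ^ n * a n
        = ∑ n ∈ Finset.range M, (γh ^ n * rh n
            + (γh ^ (n + 1) * V (n + 1) - γh ^ n * V n)) := by
          exact Finset.sum_congr rfl fun n _ => this n
      _ = (∑ n ∈ Finset.range M, γh ^ n * rh n)
            + ∑ n ∈ Finset.range M, (γh ^ (n + 1) * V (n + 1) - γh ^ n * V n) := by
          rw [Finset.sum_add_distrib]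
      _ = (∑ n ∈ Finset.range M, γh ^ n * rh n) + (γh ^ M * V M - V 0) := by
          rw [Finset.sum_range_sub (fun n => γh ^ n * V n)]; simp
  -- block identity
  have hblock : ∀ M : ℕ, ∑ t ∈ Finset.range (k * M), γl ^ t * rl t
      = c * ∑ n ∈ Finset.range M, γh ^ n * a n := by
    intro M
    induction M with
    | zero => simp
    | succ M ih =>
      have hkM : k * (M + 1) = k * M + k := by ring
      rw [hkM, Finset.sum_range_add, ih, Finset.sum_range_succ]
      have hj : ∀ j ∈ Finset.range k,
          γl ^ (k * M + j) * rl (k * M + j) = γh ^ M * γl ^ j * (a M / k) := by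
        intro j hj
        have hjk : j < k := Finset.mem_range.mp hj
        have hdiv : (k * M + j) / k = M := by
          rw [Nat.mul_add_div hk0, Nat.div_eq_of_lt hjk, add_zero]
        rw [hrl, hdiv, pow_add, pow_mul, hγlk]
      rw [Finset.sum_congr rfl hj]
      have : ∑ j ∈ Finset.range k, γh ^ M * γl ^ j * (a M / k)
          = c * (γh ^ M * a M) := by
        rw [← Finset.sum_mul, ← Finset.mul_sum, hc]
        field_simp
      rw [this]; ring
  -- subsequence limit
  have hmul : Tendsto (fun M : ℕ => k * M) atTop atTop := by
    apply tendsto_atTop_atTop.mpr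
    intro b
    exact ⟨b, fun m hm => le_trans hm (Nat.le_mul_of_pos_left m hk0)⟩
  have h1 : Tendsto (fun M => ∑ t ∈ Finset.range (k * M), γl ^ t * rl t)
      atTop (𝓝 L) := hL.comp hmul
  have h2 : Tendsto (fun M => c * ∑ n ∈ Finset.range M, γh ^ n * a n)
      atTop (𝓝 (c * ((∑' n : ℕ, γh ^ n * rh n) - V 0))) := by
    have hps : Tendsto (fun M => ∑ n ∈ Finset.range M, γh ^ n * rh n)
        atTop (𝓝 (∑' n : ℕ, γh ^ n * rh n)) := hsum.hasSum.tendsto_sum_nat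
    have : Tendsto (fun M => (∑ n ∈ Finset.range M, γh ^ n * rh n)
        + (γh ^ M * V M - V 0)) atTop
        (𝓝 ((∑' n : ℕ, γh ^ n * rh n) + (0 - V 0))) :=
      hps.add (hV.sub tendsto_const_nhds)
    have h := this.const_mul c
    have heq : c * ((∑' n : ℕ, γh ^ n * rh n) + (0 - V 0))
        = c * ((∑' n : ℕ, γh ^ n * rh n) - V 0) := by ring
    rw [heq] at h
    convert h using 2 with M
    rw [htel M]
  have h1' : Tendsto (fun M => c * ∑ n ∈ Finset.range M, γh ^ n * a n)
      atTop (𝓝 L) := by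
    convert h1 using 2 with M
    rw [hblock M]
  exact tendsto_nhds_unique h1' h2

/-- Deterministic core of HAAR's monotonic-improvement claim: with exact
discount matching `γ_l = γ_h^(1/k)` and shared initial value `V 0 = Ṽ 0`,
the low-level auxiliary objective (limit of partial discounted sums of the
evenly split advantages) improves if and only if the high-level discounted
return improves. -/
theorem low_level_improvement_iff_high_level_improvement
    (k : ℕ) (hk : 1 ≤ k) (γh : ℝ) (hγh0 : 0 < γh) (hγh1 : γh < 1)
    (γl : ℝ) (hγl : γl = γh ^ ((1 : ℝ) / (k : ℝ)))
    (rh V rh' V' : ℕ → ℝ)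
    (hrh : Summable fun n => γh ^ n * |rh n|)
    (hrh' : Summable fun n => γh ^ n * |rh' n|)
    (hV : Tendsto (fun n => γh ^ n * V n) atTop (𝓝 0))
    (hV' : Tendsto (fun n => γh ^ n * V' n) atTop (𝓝 0))
    (hV0 : V 0 = V' 0)
    (a : ℕ → ℝ) (ha : ∀ n, a n = rh n + γh * V (n + 1) - V n)
    (a' : ℕ → ℝ) (ha' : ∀ n, a' n = rh' n + γh * V' (n + 1) - V' n)
    (rl : ℕ → ℝ) (hrl : ∀ t : ℕ, rl t = a (t / k) / k)
    (rl' : ℕ → ℝ) (hrl' : ∀ t : ℕ, rl' t = a' (t / k) / k)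
    (L L' : ℝ)
    (hL : Tendsto (fun N => ∑ t ∈ Finset.range N, γl ^ t * rl t) atTop (𝓝 L))
    (hL' : Tendsto (fun N => ∑ t ∈ Finset.range N, γl ^ t * rl' t) atTop (𝓝 L')) :
    L' ≥ L ↔ (∑' n : ℕ, γh ^ n * rh' n) ≥ ∑' n : ℕ, γh ^ n * rh n := by
  have hk0 : 0 < k := hk
  have hkR : (k : ℝ) ≠ 0 := Nat.cast_ne_zero.mpr hk0.ne'
  have hγl0 : 0 < γl := hγl ▸ Real.rpow_pos_of_pos hγh0 _
  have hγlk : γl ^ k = γh := by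
    rw [hγl, ← Real.rpow_natCast (γh ^ ((1:ℝ)/(k:ℝ))) k, ← Real.rpow_mul hγh0.le]
    rw [one_div_mul_cancel hkR, Real.rpow_one]
  have hEq := haar_aux k hk γh γl hγh0 hγl0 hγlk rh V hrh hV a ha rl hrl L hL
  have hEq' := haar_aux k hk γh γl hγh0 hγl0 hγlk rh' V' hrh' hV' a' ha' rl' hrl' L' hL'
  have hc : 0 < (∑ j ∈ Finset.range k, γl ^ j) / k := by
    apply div_pos _ (Nat.cast_pos.mpr hk0)
    apply Finset.sum_pos (fun j _ => pow_pos hγl0 j)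
    exact Finset.nonempty_range_iff.mpr hk0.ne'
  rw [ge_iff_le, hEq, hEq', hV0, mul_le_mul_iff_of_pos_left hc, sub_le_sub_iff_right, ← ge_iff_le]
end
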